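/- Let G be a finite simple graph and let C₁, …, C_ℓ be a linear order of all maximal cliques of G that is v-consecutive for every vertex v. For each vertex v, let i(v) and j(v) be the smallest and largest index i with v ∈ C_i, respectively. Then assigning to each vertex v the closed interval [i(v), j(v)] ⊆ ℝ yields an interval representation of G: two distinct vertices u, v are adjacent in G if and only if [i(u), j(u)] ∩ [i(v), j(v)] ≠ ∅. -/

import Mathlib

/-!
Two distinct vertices are adjacent iff some maximal clique contains both, since by Zorn every
edge extends to a maximal clique. By consecutiveness, `v ∈ C k` exactly when
`k ∈ [i(v), j(v)]`, so a common clique is the same as a common point of the two index intervals,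
and the order embedding `Fin ℓ → ℝ` transports this to the real intervals.
-/

/-- A maximal clique: a set of pairwise adjacent vertices not properly contained in
another clique. -/
def IsMaxClique {V : Type*} (G : SimpleGraph V) (s : Set V) : Prop :=
  G.IsClique s ∧ ∀ t : Set V, G.IsClique t → s ⊆ t → s = t

section

variable {V : Type*} {G : SimpleGraph V}

theorem isMaxClique_iff_maximal {s : Set V} : IsMaxClique G s ↔ Maximal G.IsClique s :=
  ⟨fun hs => ⟨hs.1, fun _ ht hst => (hs.2 _ ht hst).ge⟩,
    fun hs => ⟨hs.prop, fun _ ht hst => hs.eq_of_subset ht hst⟩⟩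

theorem SimpleGraph.IsClique.exists_isMaxClique_superset {s : Set V} (hs : G.IsClique s) :
    ∃ t, IsMaxClique G t ∧ s ⊆ t := by
  obtain ⟨t, hst, ht⟩ := zorn_subset_nonempty {t | G.IsClique t}
    (fun c hc hchain _ => ⟨⋃₀ c, (SimpleGraph.isClique_sUnion hchain.directedOn).2 hc,
      fun _ => Set.subset_sUnion_of_mem⟩) s hs
  exact ⟨t, isMaxClique_iff_maximal.2 ht, hst⟩

theorem adj_iff_exists_mem_maxClique {ι : Type*} {C : ι → Set V}
    (hrange : ∀ s : Set V, s ∈ Set.range C ↔ IsMaxClique G s) {u v : V} (huv : u ≠ v) :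
    G.Adj u v ↔ ∃ k, u ∈ C k ∧ v ∈ C k := by
  constructor
  · intro hadj
    obtain ⟨t, ht, hsub⟩ := (G.isClique_pair.2 fun _ => hadj).exists_isMaxClique_superset
    obtain ⟨k, rfl⟩ := (hrange t).2 ht
    exact ⟨k, hsub (Set.mem_insert u {v}), hsub (Set.mem_insert_of_mem u rfl)⟩
  · rintro ⟨k, hu, hv⟩
    exact ((hrange (C k)).1 ⟨k, rfl⟩).1 hu hv huv

end

theorem mem_iff_mem_Icc_of_consecutive {V ι : Type*} [Preorder ι] {C : ι → Set V} {v : V}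
    {i j : ι} (hconsec : ∀ a b c : ι, a ≤ b → b ≤ c → v ∈ C a → v ∈ C c → v ∈ C b)
    (hi : v ∈ C i ∧ ∀ k, v ∈ C k → i ≤ k) (hj : v ∈ C j ∧ ∀ k, v ∈ C k → k ≤ j) (k : ι) :
    v ∈ C k ↔ k ∈ Set.Icc i j :=
  ⟨fun hk => ⟨hi.2 k hk, hj.2 k hk⟩, fun hk => hconsec i k j hk.1 hk.2 hi.1 hj.1⟩

theorem StrictMono.Icc_inter_Icc_nonempty_iff {α β : Type*} [LinearOrder α] [LinearOrder β]
    {f : α → β} (hf : StrictMono f) (a b c d : α) :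
    (Set.Icc (f a) (f b) ∩ Set.Icc (f c) (f d)).Nonempty ↔ (Set.Icc a b ∩ Set.Icc c d).Nonempty := by
  simp only [Set.Icc_inter_Icc, Set.nonempty_Icc, ← hf.monotone.map_max, ← hf.monotone.map_min,
    hf.le_iff_le]

theorem stmt_10_general {V : Type*} (G : SimpleGraph V)
    (ℓ : ℕ) (C : Fin ℓ → Set V)
    (hrange : ∀ s : Set V, s ∈ Set.range C ↔ IsMaxClique G s)
    (hconsec : ∀ v : V, ∀ i j k : Fin ℓ, i ≤ j → j ≤ k → v ∈ C i → v ∈ C k → v ∈ C j)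
    (iv jv : V → Fin ℓ)
    (hiv : ∀ v : V, v ∈ C (iv v) ∧ ∀ i : Fin ℓ, v ∈ C i → iv v ≤ i)
    (hjv : ∀ v : V, v ∈ C (jv v) ∧ ∀ i : Fin ℓ, v ∈ C i → i ≤ jv v) :
    ∀ u v : V, u ≠ v →
      (G.Adj u v ↔ (Set.Icc ((iv u : ℕ) : ℝ) ((jv u : ℕ) : ℝ) ∩
        Set.Icc ((iv v : ℕ) : ℝ) ((jv v : ℕ) : ℝ)).Nonempty) := by
  intro u v huv
  have hmem (w : V) := mem_iff_mem_Icc_of_consecutive (hconsec w) (hiv w) (hjv w)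
  have hcast : StrictMono fun i : Fin ℓ => ((i : ℕ) : ℝ) :=
    Nat.strictMono_cast.comp Fin.val_strictMono
  rw [adj_iff_exists_mem_maxClique hrange huv,
    hcast.Icc_inter_Icc_nonempty_iff (iv u) (jv u) (iv v) (jv v)]
  simp only [hmem, Set.Nonempty, Set.mem_inter_iff]

/-- Given a linear order `C 0, …, C (ℓ-1)` of all maximal cliques of a
finite simple graph `G` that is `v`-consecutive for every vertex `v`, assigning to each
vertex `v` the closed real interval `[iv v, jv v]`, where `iv v` and `jv v` are the
smallest and largest indices of cliques containing `v`, yields an interval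
representation of `G`. -/
theorem stmt_10 {V : Type*} [Fintype V] (G : SimpleGraph V)
    (ℓ : ℕ) (C : Fin ℓ → Set V) (hinj : Function.Injective C)
    (hrange : ∀ s : Set V, s ∈ Set.range C ↔ IsMaxClique G s)
    (hconsec : ∀ v : V, ∀ i j k : Fin ℓ, i ≤ j → j ≤ k → v ∈ C i → v ∈ C k → v ∈ C j)
    (iv jv : V → Fin ℓ)
    (hiv : ∀ v : V, v ∈ C (iv v) ∧ ∀ i : Fin ℓ, v ∈ C i → iv v ≤ i)
    (hjv : ∀ v : V, v ∈ C (jv v) ∧ ∀ i : Fin ℓ, v ∈ C i → i ≤ jv v) :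
    ∀ u v : V, u ≠ v →
      (G.Adj u v ↔ (Set.Icc ((iv u : ℕ) : ℝ) ((jv u : ℕ) : ℝ) ∩
        Set.Icc ((iv v : ℕ) : ℝ) ((jv v : ℕ) : ℝ)).Nonempty) :=
  stmt_10_general G ℓ C hrange hconsec iv jv hiv hjv
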